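/- Let t be an ordered labeled tree and let v1, v2 be distinct nodes of t. Then pos'(v̄1) < pos'(v̄2) if and only if at least one of the following holds: (1) v1 lies in the subtree of v2 in the binary tree FCNS(t) (equivalently: in t, v1 is a descendant of v2, or v1 is a later sibling of v2, or v1 is a descendant of a later sibling of v2); or (2) there exists a node u of t with depth(u) ≤ depth(v1) − 1 and pos(v1) < pos(u) ≤ pos(v2). -/

import Mathlib

/-- Ordered labeled trees (rose trees). -/
inductive RTree (α : Type) : Type
  | node : α → List (RTree α) → RTree α

/-- Extended binary trees: every node has an optional left and right child. -/
inductive BTree (α : Type) : Type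
  | nil : BTree α
  | node : α → BTree α → BTree α → BTree α

namespace BTree

/-- Tag sequence of an extended binary tree: opening tag, left subtree,
right subtree, closing tag.  `false` = opening tag, `true` = closing tag. -/
def btags {α : Type} : BTree α → List (α × Bool)
  | .nil => []
  | .node a l r => (a, false) :: (btags l ++ btags r ++ [(a, true)])

end BTree

namespace RTree

variable {α : Type}

def label : RTree α → α
  | .node a _ => a

def childLabels : RTree α → List α
  | .node _ cs => cs.map label

mutual
/-- Number of nodes of a tree. -/
def size : RTree α → ℕ
  | .node _ cs => 1 + sizeL cs
def sizeL : List (RTree α) → ℕ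
  | [] => 0
  | c :: cs => size c + sizeL cs
end

mutual
/-- `XML(t)`: the tag sequence of a depth-first traversal;
`(a, false)` is an opening tag, `(a, true)` a closing tag. -/
def xml : RTree α → List (α × Bool)
  | .node a cs => (a, false) :: (xmlL cs ++ [(a, true)])
def xmlL : List (RTree α) → List (α × Bool)
  | [] => []
  | c :: cs => xml c ++ xmlL cs
end

mutual
/-- XML tag sequence where each node is identified by its path
(list of child indices from the root). -/
def ptags : RTree α → List ℕ → List (List ℕ × Bool)
  | .node _ cs, p => (p, false) :: (ptagsL cs p 0 ++ [(p, true)])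
def ptagsL : List (RTree α) → List ℕ → ℕ → List (List ℕ × Bool)
  | [], _, _ => []
  | c :: cs, p, i => ptags c (p ++ [i]) ++ ptagsL cs p (i + 1)
end

/-- `XML(t)`, with nodes identified by their paths. -/
def tagList (t : RTree α) : List (List ℕ × Bool) := ptags t []

/-- `pos(v)`: (1-indexed) position of the opening tag of node `v` in `XML(t)`. -/
def posOpen (t : RTree α) (v : List ℕ) : ℕ := (tagList t).idxOf (v, false) + 1

/-- `pos(v̄)`: (1-indexed) position of the closing tag of node `v` in `XML(t)`. -/
def posClose (t : RTree α) (v : List ℕ) : ℕ := (tagList t).idxOf (v, true) + 1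

/-- Subtree of `t` rooted at the node with path `p` (if any). -/
def subtreeAt : RTree α → List ℕ → Option (RTree α)
  | t, [] => some t
  | .node _ cs, i :: p =>
    match cs[i]? with
    | some c => subtreeAt c p
    | none => none

/-- `p` is (the path of) a node of `t`. -/
def IsNode (t : RTree α) (p : List ℕ) : Prop := (subtreeAt t p).isSome

/-- First-child next-sibling encoding of a forest. -/
def fcnsL : List (RTree α) → BTree α
  | [] => .nil
  | .node a cs :: ts => .node a (fcnsL cs) (fcnsL ts)

/-- First-child next-sibling encoding `FCNS(t)`. -/
def fcns (t : RTree α) : BTree α := fcnsL [t]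

/-- FCNS encoding of a forest, nodes identified by their paths in the original tree;
`p` is the path of the parent, `i` the index of the first tree of the forest. -/
def pfcnsL : List (RTree α) → List ℕ → ℕ → BTree (List ℕ)
  | [], _, _ => .nil
  | .node _ cs :: ts, p, i =>
      .node (p ++ [i]) (pfcnsL cs (p ++ [i]) 0) (pfcnsL ts p (i + 1))

/-- `FCNS(t)`, with nodes identified by their paths in `t`. -/
def pfcns : RTree α → BTree (List ℕ)
  | .node _ cs => .node [] (pfcnsL cs [] 0) .nil

/-- `XML(FCNS(t))`, with nodes identified by their paths in `t`. -/
def btagList (t : RTree α) : List (List ℕ × Bool) := (pfcns t).btags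

/-- `pos'(v)`: position of the opening tag of `v` in `XML(FCNS(t))`. -/
def posOpen' (t : RTree α) (v : List ℕ) : ℕ := (btagList t).idxOf (v, false) + 1

/-- `pos'(v̄)`: position of the closing tag of `v` in `XML(FCNS(t))`. -/
def posClose' (t : RTree α) (v : List ℕ) : ℕ := (btagList t).idxOf (v, true) + 1

/-- A tree is valid against a DTD `D` if for every node, the word of labels of
its children belongs to `D` applied to the node's label. -/
def Valid (D : α → List α → Prop) (t : RTree α) : Prop :=
  ∀ p st, subtreeAt t p = some st → D st.label st.childLabels

end RTree

/-- `w` is a later sibling of `v` (as paths): same parent, larger last index. -/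
def LaterSib (w v : List ℕ) : Prop := ∃ q i j, v = q ++ [i] ∧ w = q ++ [j] ∧ i < j

/-!
Identify nodes with their paths in `t`. The opening tags of `XML(t)` occur in lexicographic
order of paths, and the closing tags of `XML(FCNS(t))` occur in the postorder of `FCNS(t)`,
which on paths is the relation `FcnsPostLT`. Both tag lists are `Pairwise` sorted, and in a
sorted list positions compare like the elements. What remains is combinatorics of paths:
`v₁` closes before `v₂` iff `v₁` lies in the FCNS-subtree of `v₂`, or `v₁ < v₂.take (|v₁| - 1)`
lexicographically; the ancestor `v₂.take (|v₁| - 1)` is the extremal choice of `u` in (2).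
-/

namespace List

variable {β : Type*} [BEq β] [LawfulBEq β] {R : β → β → Prop} {l : List β} {a b : β}

theorem rel_of_idxOf_lt_idxOf (hl : l.Pairwise R) (hb : b ∈ l) (h : l.idxOf a < l.idxOf b) :
    R a b := by
  have hb' := idxOf_lt_length_of_mem hb
  simpa only [getElem_idxOf] using pairwise_iff_getElem.mp hl _ _ (h.trans hb') hb' h

theorem idxOf_lt_idxOf_iff_of_pairwise (hl : l.Pairwise R) (ha : a ∈ l) (hb : b ∈ l)
    (hasymm : R a b → ¬ R b a) : l.idxOf a < l.idxOf b ↔ R a b := by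
  refine ⟨rel_of_idxOf_lt_idxOf hl hb, fun hab => ?_⟩
  rcases lt_trichotomy (l.idxOf a) (l.idxOf b) with h | h | h
  · exact h
  · obtain rfl := (idxOf_inj ha).mp h
    exact absurd hab (hasymm hab)
  · exact absurd (rel_of_idxOf_lt_idxOf hl ha h) (hasymm hab)

section LinearOrder

variable {γ : Type*} [LinearOrder γ]

theorem take_le_take_of_le {l₁ l₂ : List γ} (h : l₁ ≤ l₂) (n : ℕ) :
    l₁.take n ≤ l₂.take n := by
  rcases h.lt_or_eq with hlt | rfl
  · clear h
    induction hlt generalizing n with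
    | nil => exact not_lt.mp (List.IsPrefix.le (by simp))
    | rel hab => cases n; exacts [le_rfl, le_of_lt (Lex.rel hab)]
    | cons _ ih => cases n; exacts [le_rfl, cons_le_cons _ (ih _)]
  · exact le_rfl

theorem lt_take_of_lt_of_le {p u q : List γ} (hpu : p < u) (huq : u ≤ q)
    (hu : u.length + 1 ≤ p.length) : p < q.take (p.length - 1) := by
  calc p < u := hpu
    _ = u.take (p.length - 1) := (List.take_of_length_le (by omega)).symm
    _ ≤ q.take (p.length - 1) := take_le_take_of_le huq _

end LinearOrder

end List

/-- The postorder of `FCNS(t)`, on paths of `t`. After a common prefix, `i :: p` closes first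
if `i < j` and it lies strictly below child `i` (the left FCNS-subtree of `i` precedes the right
one, which holds `j :: q`), or if `q = []` and `j < i` (it lies in the right FCNS-subtree of
`j`). -/
def FcnsPostLT : List ℕ → List ℕ → Prop
  | [], _ => False
  | _ :: _, [] => True
  | i :: p, j :: q => (i = j ∧ FcnsPostLT p q) ∨ (i < j ∧ p ≠ []) ∨ (j < i ∧ q = [])

theorem fcnsPostLT_asymm : ∀ {p q : List ℕ}, FcnsPostLT p q → ¬ FcnsPostLT q p
  | [], _, h, _ | _ :: _, [], _, h => h
  | i :: p, j :: q, h, h' => by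
    simp only [FcnsPostLT] at h h'
    rcases h with ⟨rfl, h⟩ | h | h
    · rcases h' with ⟨-, h'⟩ | h' | h'
      · exact fcnsPostLT_asymm h h'
      all_goals omega
    all_goals grind

theorem fcnsPostLT_append_self {r : List ℕ} (hr : r ≠ []) : ∀ q, FcnsPostLT (q ++ r) q
  | [] => by cases r <;> simp_all [FcnsPostLT]
  | _ :: q => Or.inl ⟨rfl, fcnsPostLT_append_self hr q⟩

theorem fcnsPostLT_append_cons_append_cons {a b : ℕ} {p q : List ℕ} (hab : a < b) (hp : p ≠ []) :
    ∀ s, FcnsPostLT (s ++ a :: p) (s ++ b :: q)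
  | [] => Or.inr (Or.inl ⟨hab, hp⟩)
  | _ :: s => Or.inl ⟨rfl, fcnsPostLT_append_cons_append_cons hab hp s⟩

theorem fcnsPostLT_append_cons_append_singleton {a b : ℕ} {p : List ℕ} (hba : b < a) :
    ∀ s, FcnsPostLT (s ++ a :: p) (s ++ [b])
  | [] => Or.inr (Or.inr ⟨hba, rfl⟩)
  | _ :: s => Or.inl ⟨rfl, fcnsPostLT_append_cons_append_singleton hba s⟩

theorem LaterSib.ne_nil {w v : List ℕ} : LaterSib w v → w ≠ [] := by
  rintro ⟨s, a, b, -, rfl, -⟩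
  simp

theorem exists_laterSib_prefix_cons_iff {i j : ℕ} {p q : List ℕ} :
    (∃ w, LaterSib w (j :: q) ∧ w <+: i :: p) ↔
      (q = [] ∧ j < i) ∨ (i = j ∧ ∃ w, LaterSib w q ∧ w <+: p) := by
  constructor
  · rintro ⟨w, ⟨_ | ⟨k, s⟩, a, b, hq, rfl, hab⟩, hw⟩
    · simp_all
    · simp only [List.cons_append, List.cons.injEq, List.cons_prefix_cons] at hq hw
      exact Or.inr ⟨(hq.1.trans hw.1).symm, s ++ [b], ⟨s, a, b, hq.2, rfl, hab⟩, hw.2⟩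
  · rintro (⟨rfl, hji⟩ | ⟨rfl, w, ⟨s, a, b, rfl, rfl, hab⟩, hw⟩)
    · exact ⟨[i], ⟨[], j, i, rfl, rfl, hji⟩, by simp⟩
    · exact ⟨i :: (s ++ [b]), ⟨i :: s, a, b, rfl, rfl, hab⟩, List.cons_prefix_cons.mpr ⟨rfl, hw⟩⟩

theorem fcnsPostLT_iff {p q : List ℕ} (hne : p ≠ q) :
    FcnsPostLT p q ↔ (q <+: p ∨ ∃ w, LaterSib w q ∧ w <+: p) ∨ p < q.take (p.length - 1) := by
  induction p generalizing q with
  | nil =>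
    simp only [FcnsPostLT, List.prefix_nil, List.length_nil, false_iff]
    rintro ((rfl | ⟨w, hw, hw'⟩) | h)
    · exact hne rfl
    · exact hw.ne_nil hw'
    · exact List.not_lt_nil _ h
  | cons i p ih =>
    cases q with
    | nil => simp [FcnsPostLT]
    | cons j q =>
      rw [exists_laterSib_prefix_cons_iff, List.cons_prefix_cons, List.length_cons,
        Nat.add_sub_cancel]
      rcases p with _ | ⟨x, p⟩
      · have hw : ¬ ∃ w, LaterSib w q ∧ w = [] := fun ⟨_, hw, h⟩ => hw.ne_nil h
        have hq : i = j → q ≠ [] := by simpa [eq_comm] using hne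
        simp only [FcnsPostLT, List.prefix_nil, List.length_nil, List.take_zero, List.not_lt_nil,
          hw, ne_eq, not_true_eq_false, and_false, or_false, false_or]
        grind
      · rw [List.length_cons, List.take_succ_cons, List.cons_lt_cons_iff]
        simp only [FcnsPostLT]
        rcases lt_trichotomy i j with hij | rfl | hij
        · simp [hij, hij.ne, hij.not_gt]
        · simp [ih (q := q) (by simpa using hne)]
        · simp [hij, hij.ne, hij.ne', hij.not_gt]

namespace RTree

variable {α : Type}

theorem subtreeAt_append (t : RTree α) (p q : List ℕ) :
    subtreeAt t (p ++ q) = (subtreeAt t p).bind (subtreeAt · q) := by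
  induction p generalizing t with
  | nil => rfl
  | cons k p ih =>
    obtain ⟨a, cs⟩ := t
    cases h : cs[k]? <;> simp [subtreeAt, h, ih]

theorem IsNode.of_prefix {t : RTree α} {p q : List ℕ} (hq : IsNode t q) (hpq : p <+: q) :
    IsNode t p := by
  obtain ⟨r, rfl⟩ := hpq
  rw [IsNode, subtreeAt_append] at hq
  exact Option.isSome_of_isSome_bind hq

theorem isNode_cons {a : α} {cs : List (RTree α)} {k : ℕ} {p : List ℕ} :
    IsNode (node a cs) (k :: p) ↔ ∃ c, cs[k]? = some c ∧ IsNode c p := by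
  cases h : cs[k]? <;> simp [IsNode, subtreeAt, h]

mutual
theorem prefix_of_mem_ptags : ∀ (c : RTree α) (lbl : List ℕ) {x : List ℕ × Bool},
    x ∈ ptags c lbl → lbl <+: x.1
  | .node _ cs, lbl, x, hx => by
    simp only [ptags, List.mem_cons, List.mem_append, List.not_mem_nil, or_false] at hx
    rcases hx with rfl | hx | rfl
    · exact List.prefix_rfl
    · obtain ⟨j, r, -, hr⟩ := exists_of_mem_ptagsL cs lbl 0 hx
      exact ⟨j :: r, hr.symm⟩
    · exact List.prefix_rfl

theorem exists_of_mem_ptagsL : ∀ (cs : List (RTree α)) (lbl : List ℕ) (i : ℕ)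
    {x : List ℕ × Bool}, x ∈ ptagsL cs lbl i → ∃ j r, i ≤ j ∧ x.1 = lbl ++ j :: r
  | [], _, _, _, hx => by simp [ptagsL] at hx
  | c :: cs, lbl, i, x, hx => by
    rcases List.mem_append.mp hx with hx | hx
    · obtain ⟨r, hr⟩ := prefix_of_mem_ptags c (lbl ++ [i]) hx
      exact ⟨i, r, le_rfl, by simp [← hr]⟩
    · obtain ⟨j, r, hij, hr⟩ := exists_of_mem_ptagsL cs lbl (i + 1) hx
      exact ⟨j, r, by omega, hr⟩
end

mutual
theorem mem_ptags : ∀ (c : RTree α) (lbl : List ℕ) {p : List ℕ} (b : Bool),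
    IsNode c p → (lbl ++ p, b) ∈ ptags c lbl
  | .node _ _, lbl, [], b, _ => by cases b <;> simp [ptags]
  | .node _ cs, lbl, k :: p, b, h => by
    obtain ⟨c, hk, hc⟩ := isNode_cons.mp h
    have := mem_ptagsL cs lbl 0 b hk hc
    simp_all [ptags]

theorem mem_ptagsL : ∀ (cs : List (RTree α)) (lbl : List ℕ) (i : ℕ) {k : ℕ} {c : RTree α}
    {p : List ℕ} (b : Bool), cs[k]? = some c → IsNode c p →
      (lbl ++ (i + k) :: p, b) ∈ ptagsL cs lbl i
  | [], _, _, _, _, _, _, hk, _ => by simp at hk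
  | c :: _, lbl, i, 0, _, p, b, hk, h => by
    obtain rfl : c = _ := Option.some.inj hk
    simpa [ptagsL] using Or.inl (mem_ptags c (lbl ++ [i]) b h)
  | _ :: cs, lbl, i, k + 1, _, p, b, hk, h => by
    have := mem_ptagsL cs lbl (i + 1) b hk h
    rw [Nat.add_right_comm] at this
    exact List.mem_append_right _ (by simpa [Nat.add_assoc] using this)
end

mutual
theorem pairwise_ptags : ∀ (c : RTree α) (lbl : List ℕ),
    (ptags c lbl).Pairwise fun x y => x.2 = false → y.2 = false → x.1 < y.1
  | .node _ cs, lbl => by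
    simp only [ptags, List.pairwise_cons, List.pairwise_append, List.mem_append,
      List.mem_singleton]
    refine ⟨?_, pairwise_ptagsL cs lbl 0, by simp, by simp_all⟩
    rintro y (hy | rfl) - hy'
    · obtain ⟨j, r, -, hr⟩ := exists_of_mem_ptagsL cs lbl 0 hy
      simpa [hr] using List.append_left_lt (List.nil_lt_cons j r)
    · simp at hy'

theorem pairwise_ptagsL : ∀ (cs : List (RTree α)) (lbl : List ℕ) (i : ℕ),
    (ptagsL cs lbl i).Pairwise fun x y => x.2 = false → y.2 = false → x.1 < y.1
  | [], _, _ => List.Pairwise.nil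
  | c :: cs, lbl, i => by
    refine List.pairwise_append.mpr ⟨pairwise_ptags c _, pairwise_ptagsL cs lbl (i + 1), ?_⟩
    rintro x hx y hy - -
    obtain ⟨r, hr⟩ := prefix_of_mem_ptags c (lbl ++ [i]) hx
    obtain ⟨j, r', hij, hr'⟩ := exists_of_mem_ptagsL cs lbl (i + 1) hy
    rw [← hr, hr', List.append_assoc, List.singleton_append]
    exact List.append_left_lt (List.cons_lt_cons_iff.mpr (Or.inl (by omega)))
end

theorem mem_btags_pfcnsL_iff : ∀ (cs : List (RTree α)) (lbl : List ℕ) (i : ℕ)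
    {x : List ℕ × Bool}, x ∈ (pfcnsL cs lbl i).btags ↔ x ∈ ptagsL cs lbl i
  | [], _, _, _ => by simp [pfcnsL, ptagsL, BTree.btags]
  | .node _ cs :: ts, lbl, i, x => by
    simp only [pfcnsL, ptagsL, ptags, BTree.btags, List.mem_cons, List.mem_append,
      mem_btags_pfcnsL_iff cs, mem_btags_pfcnsL_iff ts]
    tauto

theorem exists_of_mem_btags_pfcnsL {cs : List (RTree α)} {lbl : List ℕ} {i : ℕ}
    {x : List ℕ × Bool} (hx : x ∈ (pfcnsL cs lbl i).btags) : ∃ j r, i ≤ j ∧ x.1 = lbl ++ j :: r :=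
  exists_of_mem_ptagsL cs lbl i ((mem_btags_pfcnsL_iff cs lbl i).mp hx)

theorem mem_btagList_iff (t : RTree α) {x : List ℕ × Bool} : x ∈ btagList t ↔ x ∈ tagList t := by
  obtain ⟨_, cs⟩ := t
  simp [btagList, tagList, pfcns, ptags, BTree.btags, mem_btags_pfcnsL_iff]

theorem pairwise_btags_pfcnsL : ∀ (cs : List (RTree α)) (lbl : List ℕ) (i : ℕ),
    (pfcnsL cs lbl i).btags.Pairwise fun x y => x.2 = true → y.2 = true → FcnsPostLT x.1 y.1
  | [], _, _ => by simp [pfcnsL, BTree.btags]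
  | .node _ cs :: ts, lbl, i => by
    simp only [pfcnsL, BTree.btags, List.pairwise_cons, List.pairwise_append, List.mem_append,
      List.mem_singleton]
    refine ⟨by simp, ⟨⟨pairwise_btags_pfcnsL cs _ 0, pairwise_btags_pfcnsL ts lbl (i + 1), ?_⟩,
      by simp, ?_⟩⟩
    · rintro x hx y hy - -
      obtain ⟨j, r, -, hr⟩ := exists_of_mem_btags_pfcnsL hx
      obtain ⟨k, r', hik, hr'⟩ := exists_of_mem_btags_pfcnsL hy
      rw [hr, hr', List.append_assoc, List.singleton_append]
      exact fcnsPostLT_append_cons_append_cons (by omega) (List.cons_ne_nil _ _) lbl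
    · rintro x (hx | hx) _ rfl - -
      · obtain ⟨j, r, -, hr⟩ := exists_of_mem_btags_pfcnsL hx
        rw [hr]
        exact fcnsPostLT_append_self (List.cons_ne_nil _ _) _
      · obtain ⟨k, r', hik, hr'⟩ := exists_of_mem_btags_pfcnsL hx
        rw [hr']
        exact fcnsPostLT_append_cons_append_singleton (by omega) lbl

theorem pairwise_btagList (t : RTree α) :
    (btagList t).Pairwise fun x y => x.2 = true → y.2 = true → FcnsPostLT x.1 y.1 := by
  obtain ⟨_, cs⟩ := t
  simp only [btagList, pfcns, BTree.btags, List.append_nil, List.pairwise_cons,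
    List.pairwise_append, List.mem_singleton]
  refine ⟨by simp, pairwise_btags_pfcnsL cs [] 0, by simp, ?_⟩
  rintro x hx _ rfl - -
  obtain ⟨j, r, -, hr⟩ := exists_of_mem_btags_pfcnsL hx
  simp [hr, FcnsPostLT]

theorem mem_tagList {t : RTree α} {p : List ℕ} (hp : IsNode t p) (b : Bool) :
    (p, b) ∈ tagList t :=
  mem_ptags t [] b hp

theorem pairwise_tagList (t : RTree α) :
    (tagList t).Pairwise fun x y => x.2 = false → y.2 = false → x.1 < y.1 :=
  pairwise_ptags t []

theorem posOpen_lt_posOpen_iff {t : RTree α} {p q : List ℕ} (hp : IsNode t p) (hq : IsNode t q) :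
    posOpen t p < posOpen t q ↔ p < q := by
  rw [posOpen, posOpen, Nat.add_lt_add_iff_right,
    List.idxOf_lt_idxOf_iff_of_pairwise (pairwise_tagList t) (mem_tagList hp _) (mem_tagList hq _)]
  · simp
  · simpa using fun h : p < q => h.asymm

theorem posOpen_le_posOpen_iff {t : RTree α} {p q : List ℕ} (hp : IsNode t p) (hq : IsNode t q) :
    posOpen t p ≤ posOpen t q ↔ p ≤ q := by
  rw [← not_lt, ← not_lt, posOpen_lt_posOpen_iff hq hp]

theorem posClose'_lt_posClose'_iff {t : RTree α} {p q : List ℕ} (hp : IsNode t p)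
    (hq : IsNode t q) : posClose' t p < posClose' t q ↔ FcnsPostLT p q := by
  rw [posClose', posClose', Nat.add_lt_add_iff_right,
    List.idxOf_lt_idxOf_iff_of_pairwise (pairwise_btagList t)
      ((mem_btagList_iff t).mpr (mem_tagList hp _)) ((mem_btagList_iff t).mpr (mem_tagList hq _))]
  · simp
  · simpa using fcnsPostLT_asymm

theorem exists_isNode_between_iff {t : RTree α} {p q : List ℕ} (hq : IsNode t q) :
    (∃ u, IsNode t u ∧ u.length + 1 ≤ p.length ∧ p < u ∧ u ≤ q) ↔
      p < q.take (p.length - 1) := by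
  refine ⟨fun ⟨_, _, hu, hpu, huq⟩ => List.lt_take_of_lt_of_le hpu huq hu, fun h => ?_⟩
  have hp : p ≠ [] := by rintro rfl; exact List.not_lt_nil _ h
  refine ⟨_, hq.of_prefix (List.take_prefix _ q), ?_, h, not_lt.mp (List.take_prefix _ q).le⟩
  have := List.length_pos_of_ne_nil hp
  simp only [List.length_take]
  omega

end RTree

/-- For distinct nodes `v₁, v₂` of `t`, `pos'(v̄₁) < pos'(v̄₂)` iff
(1) `v₁` lies in the subtree of `v₂` in `FCNS(t)` (equivalently, in `t`: `v₁` is a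
descendant of `v₂`, or `v₁` is a later sibling of `v₂`, or `v₁` is a descendant of a
later sibling of `v₂`); or (2) there is a node `u` of `t` with
`depth(u) ≤ depth(v₁) − 1` and `pos(v₁) < pos(u) ≤ pos(v₂)`. -/
theorem posClose'_lt_iff {α : Type} (t : RTree α) (v₁ v₂ : List ℕ)
    (h₁ : RTree.IsNode t v₁) (h₂ : RTree.IsNode t v₂) (hne : v₁ ≠ v₂) :
    RTree.posClose' t v₁ < RTree.posClose' t v₂ ↔
      ((v₂ <+: v₁ ∨ ∃ w, LaterSib w v₂ ∧ w <+: v₁) ∨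
        ∃ u, RTree.IsNode t u ∧ u.length + 1 ≤ v₁.length ∧
          RTree.posOpen t v₁ < RTree.posOpen t u ∧
          RTree.posOpen t u ≤ RTree.posOpen t v₂) := by
  rw [RTree.posClose'_lt_posClose'_iff h₁ h₂, fcnsPostLT_iff hne,
    ← RTree.exists_isNode_between_iff h₂]
  refine or_congr_right (exists_congr fun u => and_congr_right fun hu => ?_)
  rw [RTree.posOpen_lt_posOpen_iff h₁ hu, RTree.posOpen_le_posOpen_iff hu h₂]
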